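/- For any initial equilibrium (r(1),𝒞(1)) and target equilibrium (r*,𝒞*), there exists a transformation path from (r(1),𝒞(1)) to (r*,𝒞*) whose total cost equals the minimum over all transformation paths between these two profiles and whose length (number of steps) is at most 2m − 1, where m is the number of row-player strategies. -/

import Mathlib

open Finset

/-- Reward needed to incentivize the row player to play `i'` when the columns play `𝒞`. -/
noncomputable def Trow {m n k : ℕ} [NeZero m] (R : Fin m → Fin n → ℝ)
    (𝒞 : Fin k → Fin n) (i' : Fin m) : ℝ :=
  (univ.sup' univ_nonempty fun i => ∑ j, R i (𝒞 j)) - ∑ j, R i' (𝒞 j)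

/-- Reward needed to incentivize the column players to play `𝒞'` when the row plays `i`. -/
noncomputable def Tcol {m n k : ℕ} [NeZero n] (C : Fin m → Fin n → ℝ)
    (i : Fin m) (𝒞' : Fin k → Fin n) : ℝ :=
  k * (univ.sup' univ_nonempty fun q => C i q) - ∑ j, C i (𝒞' j)

/-- `(i, 𝒞)` is an equilibrium if `T_𝒞(i) = 0` and `T_i(𝒞) = 0`. -/
def IsEquilibrium {m n k : ℕ} [NeZero m] [NeZero n] (R C : Fin m → Fin n → ℝ)
    (i : Fin m) (𝒞 : Fin k → Fin n) : Prop :=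
  Trow R 𝒞 i = 0 ∧ Tcol C i 𝒞 = 0

/-- Total cost of the transformation path `P 0, P 1, …, P L`. -/
noncomputable def pathCost {m n k : ℕ} [NeZero m] [NeZero n] (R C : Fin m → Fin n → ℝ)
    (P : ℕ → Fin m × (Fin k → Fin n)) (L : ℕ) : ℝ :=
  ∑ t ∈ Finset.range L, (Tcol C (P t).1 (P (t+1)).2 + Trow R (P t).2 (P (t+1)).1)

/-- The set of total costs of transformation paths from profile `a` to profile `b`. -/
noncomputable def transCosts {m n k : ℕ} [NeZero m] [NeZero n] (R C : Fin m → Fin n → ℝ)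
    (a b : Fin m × (Fin k → Fin n)) : Set ℝ :=
  {x | ∃ (L : ℕ) (P : ℕ → Fin m × (Fin k → Fin n)),
    P 0 = a ∧ P L = b ∧ x = pathCost R C P L}

/-!
Let `h(i, i') = min_𝒞 (T_i(𝒞) + T_𝒞(i'))` be the cheapest way to move the row player from `i` to
`i'` through a single column profile, and let `D` be the shortest-walk distance from `r(1)` in the
complete digraph on row strategies weighted by `h`. The potential
`Φ(r, 𝒞) = D(r) + max_i (D(i) - T_𝒞(i))` grows along any step by at most the cost of that step; it
vanishes at the equilibrium `(r(1), 𝒞(1))` and is at least `2 D(r*)` at the equilibrium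
`(r*, 𝒞*)`, so every transformation path costs at least `2 D(r*)`. Conversely, a shortest walk
`r(1) = v₀, …, v_q = r*` can be taken with `q < m` (cutting cycles does not increase its cost), and
the path that alternately moves the columns to a profile realizing `h(v_s, v_{s+1})` and then the
row to `v_{s+1}` has length `2q + 1` and pays each `h(v_s, v_{s+1})` exactly twice.
-/

section WalkDist

variable {α : Type*} (w : α → α → ℝ)

/-- The cost of `u 0, …, u q` as a walk in the complete digraph on `α` weighted by `w`. -/
def walkCost (u : ℕ → α) (q : ℕ) : ℝ :=
  ∑ s ∈ range q, w (u s) (u (s + 1))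

def walkCosts (a b : α) : Set ℝ :=
  {x | ∃ (q : ℕ) (u : ℕ → α), u 0 = a ∧ u q = b ∧ x = walkCost w u q}

noncomputable def walkDist (a b : α) : ℝ :=
  sInf (walkCosts w a b)

variable {w}

lemma walkCost_nonneg (hw : ∀ i j, 0 ≤ w i j) (u : ℕ → α) (q : ℕ) : 0 ≤ walkCost w u q :=
  sum_nonneg fun _ _ => hw _ _

lemma walkCost_congr {u v : ℕ → α} {q : ℕ} (h : ∀ s ≤ q, u s = v s) :
    walkCost w u q = walkCost w v q :=
  sum_congr rfl fun s hs => by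
    rw [mem_range] at hs
    rw [h s hs.le, h (s + 1) hs]

lemma walkCost_splice_le (hw : ∀ i j, 0 ≤ w i j) (u : ℕ → α) {a d : ℕ} (h : u a = u (a + d))
    (r : ℕ) :
    walkCost w (fun s => if s < a then u s else u (s + d)) (a + r) ≤ walkCost w u (a + d + r) := by
  have hhead : ∑ s ∈ range a, w (if s < a then u s else u (s + d))
      (if s + 1 < a then u (s + 1) else u (s + 1 + d)) = ∑ s ∈ range a, w (u s) (u (s + 1)) := by
    refine sum_congr rfl fun s hs => ?_
    rw [mem_range] at hs
    rcases (Nat.succ_le_of_lt hs).lt_or_eq with hlt | heq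
    · simp [hs, hlt]
    · subst heq
      simp [h]
  have hcycle : 0 ≤ ∑ x ∈ range d, w (u (a + x)) (u (a + x + 1)) :=
    sum_nonneg fun _ _ => hw _ _
  simp only [walkCost, add_assoc a d r, sum_range_add, hhead]
  have hpast : ∀ x, ¬ a + x < a ∧ ¬ a + x + 1 < a := fun x => by omega
  simp only [hpast, if_false]
  have htail : ∑ x ∈ range r, w (u (a + x + d)) (u (a + x + 1 + d))
      = ∑ x ∈ range r, w (u (a + (d + x))) (u (a + (d + x) + 1)) :=
    sum_congr rfl fun x _ => by rw [show a + x + d = a + (d + x) by omega,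
      show a + x + 1 + d = a + (d + x) + 1 by omega]
  rw [htail]
  linarith

lemma walkDist_le (hw : ∀ i j, 0 ≤ w i j) {u : ℕ → α} {q : ℕ} :
    walkDist w (u 0) (u q) ≤ walkCost w u q :=
  csInf_le ⟨0, fun _ ⟨_, v, _, _, hx⟩ => hx ▸ walkCost_nonneg hw v _⟩ ⟨q, u, rfl, rfl, rfl⟩

variable [Fintype α]

lemma exists_walk_length_lt_card_le (hw : ∀ i j, 0 ≤ w i j) (p : ℕ) (u : ℕ → α) :
    ∃ q < Fintype.card α, ∃ v : ℕ → α, v 0 = u 0 ∧ v q = u p ∧ walkCost w v q ≤ walkCost w u p := by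
  induction p using Nat.strong_induction_on generalizing u with
  | _ p ih =>
    by_cases hp : p < Fintype.card α
    · exact ⟨p, hp, u, rfl, rfl, le_rfl⟩
    obtain ⟨x, y, hxy, hrep⟩ :=
      Fintype.exists_ne_map_eq_of_card_lt (fun s : Fin (Fintype.card α + 1) => u s) (by simp)
    obtain ⟨a, d, r, hd, hrep, hp⟩ : ∃ a d r, 0 < d ∧ u a = u (a + d) ∧ p = a + d + r := by
      rcases Fin.lt_or_lt_of_ne hxy with h | h
      · exact ⟨x, y - x, p - y, by omega, by simpa [Nat.add_sub_cancel' h.le] using hrep, by omega⟩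
      · exact ⟨y, x - y, p - x, by omega, by simpa [Nat.add_sub_cancel' h.le] using hrep.symm,
          by omega⟩
    obtain ⟨q, hq, v, hv0, hvq, hcost⟩ :=
      ih (a + r) (by omega) (fun s => if s < a then u s else u (s + d))
    refine ⟨q, hq, v, ?_, ?_, hcost.trans ?_⟩
    · rcases Nat.eq_zero_or_pos a with rfl | ha
      · simpa [hv0] using hrep.symm
      · simpa [ha] using hv0
    · simpa [hp, Nat.add_right_comm a r d] using hvq
    · rw [hp]
      exact walkCost_splice_le hw u hrep r

lemma finite_walkCost_lt (N : ℕ) : {x | ∃ q < N, ∃ u : ℕ → α, x = walkCost w u q}.Finite := by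
  refine (Set.finite_Iio N).biUnion (fun q _ => Set.finite_range
    fun f : Fin (q + 1) → α => ∑ s : Fin q, w (f s.castSucc) (f s.succ)) |>.subset ?_
  rintro x ⟨q, hq, u, rfl⟩
  exact Set.mem_biUnion (x := q) hq ⟨fun i => u i, by simp [walkCost, ← Fin.sum_univ_eq_sum_range]⟩

lemma exists_walk_length_lt_card_isLeast (hw : ∀ i j, 0 ≤ w i j) (a b : α) :
    ∃ q < Fintype.card α, ∃ u : ℕ → α, u 0 = a ∧ u q = b ∧
      IsLeast (walkCosts w a b) (walkCost w u q) := by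
  set short := {x | ∃ q < Fintype.card α, ∃ u : ℕ → α, u 0 = a ∧ u q = b ∧ x = walkCost w u q}
  have hfin : short.Finite := (finite_walkCost_lt (w := w) (Fintype.card α)).subset
    fun x ⟨q, hq, u, _, _, hx⟩ => ⟨q, hq, u, hx⟩
  have hshort : ∀ p (u : ℕ → α), u 0 = a → u p = b → ∃ x ∈ short, x ≤ walkCost w u p :=
    fun p u hu0 hup =>
      let ⟨q, hq, v, hv0, hvq, hle⟩ := exists_walk_length_lt_card_le hw p u
      ⟨_, ⟨q, hq, v, hv0.trans hu0, hvq.trans hup, rfl⟩, hle⟩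
  obtain ⟨x, hx, -⟩ := hshort 1 (fun s => if s = 0 then a else b) rfl rfl
  obtain ⟨_, ⟨q, hq, u, hu0, huq, rfl⟩, hmin⟩ := Set.exists_min_image short id hfin ⟨x, hx⟩
  refine ⟨q, hq, u, hu0, huq, ⟨q, u, hu0, huq, rfl⟩, ?_⟩
  rintro _ ⟨p, v, hv0, hvp, rfl⟩
  obtain ⟨y, hy, hle⟩ := hshort p v hv0 hvp
  exact (hmin y hy).trans hle

lemma exists_walk_length_lt_card_walkCost_eq (hw : ∀ i j, 0 ≤ w i j) (a b : α) :
    ∃ q < Fintype.card α, ∃ u : ℕ → α, u 0 = a ∧ u q = b ∧ walkCost w u q = walkDist w a b :=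
  let ⟨q, hq, u, hu0, huq, hleast⟩ := exists_walk_length_lt_card_isLeast hw a b
  ⟨q, hq, u, hu0, huq, hleast.csInf_eq.symm⟩

lemma walkDist_self (hw : ∀ i j, 0 ≤ w i j) (a : α) : walkDist w a a = 0 := by
  obtain ⟨q, -, u, hu0, huq, hcost⟩ := exists_walk_length_lt_card_walkCost_eq hw a a
  refine le_antisymm ?_ (hcost ▸ walkCost_nonneg hw u q)
  simpa [walkCost] using walkDist_le hw (u := fun _ => a) (q := 0)

lemma walkDist_le_add (hw : ∀ i j, 0 ≤ w i j) (a b c : α) :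
    walkDist w a c ≤ walkDist w a b + w b c := by
  obtain ⟨q, -, u, rfl, rfl, hcost⟩ := exists_walk_length_lt_card_walkCost_eq hw a b
  set v := Function.update u (q + 1) c
  have hv : ∀ s ≤ q, v s = u s := fun s hs => Function.update_of_ne (by omega) _ _
  calc walkDist w (u 0) c = walkDist w (v 0) (v (q + 1)) := by simp [v]
    _ ≤ walkCost w v (q + 1) := walkDist_le hw
    _ = walkDist w (u 0) (u q) + w (u q) c := by
      rw [walkCost, sum_range_succ, ← walkCost, walkCost_congr hv, hcost, hv q le_rfl]
      simp [v]

end WalkDist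

lemma Trow_nonneg {m n k : ℕ} [NeZero m] (R : Fin m → Fin n → ℝ) (𝒞 : Fin k → Fin n)
    (i : Fin m) : 0 ≤ Trow R 𝒞 i :=
  sub_nonneg.2 (le_sup' (fun i => ∑ j, R i (𝒞 j)) (mem_univ i))

lemma Tcol_nonneg {m n k : ℕ} [NeZero n] (C : Fin m → Fin n → ℝ) (i : Fin m)
    (𝒞 : Fin k → Fin n) : 0 ≤ Tcol C i 𝒞 := by
  have h := sum_le_card_nsmul univ (fun j => C i (𝒞 j)) (univ.sup' univ_nonempty fun q => C i q)
    fun j _ => le_sup' (C i) (mem_univ (𝒞 j))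
  simpa [Tcol] using h

section Game

variable {m n k : ℕ} [NeZero m] [NeZero n] (R C : Fin m → Fin n → ℝ)

variable (k) in
noncomputable def rowMoveCost (i i' : Fin m) : ℝ :=
  (univ : Finset (Fin k → Fin n)).inf' univ_nonempty fun 𝒞 => Tcol C i 𝒞 + Trow R 𝒞 i'

lemma rowMoveCost_le (i i' : Fin m) (𝒞 : Fin k → Fin n) :
    rowMoveCost k R C i i' ≤ Tcol C i 𝒞 + Trow R 𝒞 i' :=
  inf'_le _ (mem_univ 𝒞)

variable (k) in
lemma rowMoveCost_nonneg (i i' : Fin m) : 0 ≤ rowMoveCost k R C i i' :=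
  le_inf' _ _ fun 𝒞 _ => add_nonneg (Tcol_nonneg C i 𝒞) (Trow_nonneg R 𝒞 i')

lemma exists_rowMoveCost_eq (i i' : Fin m) :
    ∃ 𝒞 : Fin k → Fin n, rowMoveCost k R C i i' = Tcol C i 𝒞 + Trow R 𝒞 i' :=
  let ⟨𝒞, _, h⟩ :=
    exists_mem_eq_inf' univ_nonempty fun 𝒞 : Fin k → Fin n => Tcol C i 𝒞 + Trow R 𝒞 i'
  ⟨𝒞, h⟩

noncomputable def colPotential (r₁ : Fin m) (𝒞 : Fin k → Fin n) : ℝ :=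
  univ.sup' univ_nonempty fun i => walkDist (rowMoveCost k R C) r₁ i - Trow R 𝒞 i

lemma walkDist_sub_Trow_le_colPotential (r₁ i : Fin m) (𝒞 : Fin k → Fin n) :
    walkDist (rowMoveCost k R C) r₁ i - Trow R 𝒞 i ≤ colPotential R C r₁ 𝒞 :=
  le_sup' (fun i => walkDist (rowMoveCost k R C) r₁ i - Trow R 𝒞 i) (mem_univ i)

lemma colPotential_le_walkDist_add_Tcol (r₁ r : Fin m) (𝒞 : Fin k → Fin n) :
    colPotential R C r₁ 𝒞 ≤ walkDist (rowMoveCost k R C) r₁ r + Tcol C r 𝒞 :=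
  sup'_le _ _ fun i _ => by
    linarith [walkDist_le_add (rowMoveCost_nonneg k R C) r₁ r i, rowMoveCost_le R C r i 𝒞]

noncomputable def profilePotential (r₁ : Fin m) (x : Fin m × (Fin k → Fin n)) : ℝ :=
  walkDist (rowMoveCost k R C) r₁ x.1 + colPotential R C r₁ x.2

lemma profilePotential_sub_le (r₁ : Fin m) (x y : Fin m × (Fin k → Fin n)) :
    profilePotential R C r₁ y - profilePotential R C r₁ x ≤ Tcol C x.1 y.2 + Trow R x.2 y.1 := by
  unfold profilePotential
  linarith [walkDist_sub_Trow_le_colPotential R C r₁ y.1 x.2,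
    colPotential_le_walkDist_add_Tcol R C r₁ x.1 y.2]

lemma profilePotential_sub_le_pathCost (r₁ : Fin m) (P : ℕ → Fin m × (Fin k → Fin n)) (L : ℕ) :
    profilePotential R C r₁ (P L) - profilePotential R C r₁ (P 0) ≤ pathCost R C P L := by
  rw [← sum_range_sub (fun t => profilePotential R C r₁ (P t))]
  exact sum_le_sum fun t _ => profilePotential_sub_le R C r₁ (P t) (P (t + 1))

lemma two_mul_walkDist_le_pathCost {r₁ r' : Fin m} {C₁ C' : Fin k → Fin n}
    (hinit : IsEquilibrium R C r₁ C₁) (htarget : IsEquilibrium R C r' C')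
    {P : ℕ → Fin m × (Fin k → Fin n)} {L : ℕ} (hP0 : P 0 = (r₁, C₁)) (hPL : P L = (r', C')) :
    2 * walkDist (rowMoveCost k R C) r₁ r' ≤ pathCost R C P L := by
  have hstart : profilePotential R C r₁ (P 0) ≤ 0 := by
    have := colPotential_le_walkDist_add_Tcol R C r₁ r₁ C₁
    simp only [profilePotential, hP0, walkDist_self (rowMoveCost_nonneg k R C), hinit.2] at this ⊢
    linarith
  have hend : 2 * walkDist (rowMoveCost k R C) r₁ r' ≤ profilePotential R C r₁ (P L) := by
    have := walkDist_sub_Trow_le_colPotential R C r₁ r' C'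
    simp only [profilePotential, hPL, htarget.1] at this ⊢
    linarith
  linarith [profilePotential_sub_le_pathCost R C r₁ P L]

/-- Columns and row move alternately: `(ρ 0, κ 0), (ρ 0, κ 1), (ρ 1, κ 1), (ρ 1, κ 2), …`. -/
def zigzag (ρ : ℕ → Fin m) (κ : ℕ → Fin k → Fin n) (t : ℕ) : Fin m × (Fin k → Fin n) :=
  (ρ (t / 2), κ ((t + 1) / 2))

lemma pathCost_zigzag (ρ : ℕ → Fin m) (κ : ℕ → Fin k → Fin n) (q : ℕ) :
    pathCost R C (zigzag ρ κ) (2 * q + 1) =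
      2 * ∑ j ∈ range q, (Tcol C (ρ j) (κ (j + 1)) + Trow R (κ (j + 1)) (ρ (j + 1)))
        + Tcol C (ρ q) (κ (q + 1)) + Trow R (κ 0) (ρ 0) := by
  induction q with
  | zero => simp [pathCost, zigzag]
  | succ q ih =>
    rw [show 2 * (q + 1) + 1 = 2 * q + 1 + 1 + 1 by ring, pathCost, sum_range_succ, sum_range_succ,
      ← pathCost, ih]
    simp only [zigzag, sum_range_succ, show (2 * q + 1) / 2 = q by omega,
      show (2 * q + 1 + 1) / 2 = q + 1 by omega, show (2 * q + 1 + 1 + 1) / 2 = q + 1 by omega,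
      show (2 * q + 1 + 1 + 1 + 1) / 2 = q + 2 by omega]
    ring

lemma exists_pathCost_eq_two_mul_walkDist {r₁ r' : Fin m} {C₁ C' : Fin k → Fin n}
    (hinit : IsEquilibrium R C r₁ C₁) (htarget : IsEquilibrium R C r' C') :
    ∃ L ≤ 2 * m - 1, ∃ P : ℕ → Fin m × (Fin k → Fin n), P 0 = (r₁, C₁) ∧ P L = (r', C') ∧
      pathCost R C P L = 2 * walkDist (rowMoveCost k R C) r₁ r' := by
  obtain ⟨q, hq, v, hv0, hvq, hcost⟩ :=
    exists_walk_length_lt_card_walkCost_eq (rowMoveCost_nonneg k R C) r₁ r'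
  rw [Fintype.card_fin] at hq
  choose c hc using fun s => exists_rowMoveCost_eq R C (v s) (v (s + 1))
  -- `κ (j + 1)` is a column profile realizing the move `v j → v (j + 1)`.
  set κ : ℕ → Fin k → Fin n := fun j => if j = 0 then C₁ else if j = q + 1 then C' else c (j - 1)
  have hmove : ∀ j ∈ range q, Tcol C (v j) (κ (j + 1)) + Trow R (κ (j + 1)) (v (j + 1)) =
      rowMoveCost k R C (v j) (v (j + 1)) :=
    fun j hj => by
      rw [mem_range] at hj
      simp [κ, hc, hj.ne]
  refine ⟨2 * q + 1, by omega, zigzag v κ, by simp [zigzag, κ, hv0], ?_, ?_⟩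
  · simp [zigzag, κ, hvq, show (2 * q + 1) / 2 = q by omega,
      show (2 * q + 1 + 1) / 2 = q + 1 by omega]
  · rw [pathCost_zigzag, sum_congr rfl hmove, ← walkCost, hcost]
    simp [κ, hv0, hvq, hinit.1, htarget.2]

end Game

/-- For any initial equilibrium `(r(1),𝒞(1))` and target equilibrium `(r*,𝒞*)`, there exists a
transformation path between them whose total cost is the minimum over all transformation paths
between these two profiles and whose length (number of steps) is at most `2m − 1`. -/
theorem exists_optimal_transformation_path_of_length_le
    (m n k : ℕ) [NeZero m] [NeZero n]
    (R C : Fin m → Fin n → ℝ)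
    (r1 rstar : Fin m) (C1 Cstar : Fin k → Fin n)
    (hinit : IsEquilibrium R C r1 C1)
    (htarget : IsEquilibrium R C rstar Cstar) :
    ∃ (L : ℕ) (P : ℕ → Fin m × (Fin k → Fin n)),
      P 0 = (r1, C1) ∧ P L = (rstar, Cstar) ∧ L ≤ 2 * m - 1 ∧
      IsLeast (transCosts R C (r1, C1) (rstar, Cstar)) (pathCost R C P L) := by
  obtain ⟨L, hL, P, hP0, hPL, hcost⟩ := exists_pathCost_eq_two_mul_walkDist R C hinit htarget
  refine ⟨L, P, hP0, hPL, hL, ⟨L, P, hP0, hPL, rfl⟩, ?_⟩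
  rintro _ ⟨L', Q, hQ0, hQL, rfl⟩
  exact hcost ▸ two_mul_walkDist_le_pathCost R C hinit htarget hQ0 hQL
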